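/- For every n ≥ 1, the Krasnosel'skii–Mann iterates satisfy √(π · Σ_{i=1}^n α_i(1−α_i)) · ‖x_n − T x_n‖ ≤ diam(C). Equivalently, ‖x_n − T x_n‖ ≤ diam(C) / √(π Σ_{i=1}^n α_i(1−α_i)) whenever Σ_{i=1}^n α_i(1−α_i) > 0. -/

import Mathlib

/-!
Couple the iteration with a lazy random walk. Let `Z_{m,n} = U_n - D_m`, where `U_n` counts the
successes of independent coins of biases `α 1, …, α n` and `D_m` those of a second, independent
family of coins of biases `α 1, …, α m`. A step of the iteration is a convex combination with
weights `1 - α k, α k`, like one coin flip, so induction on `m + n` and nonexpansiveness give,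
for `m ≤ n`, `‖x m - x n‖ ≤ diam C · E sign Z_{m,n}` and
`‖x m - T (x n)‖ ≤ diam C · E sign (Z_{m,n} + 1)`.
On the diagonal `Z_{n,n}` is symmetric, so `E sign (Z_{n,n} + 1) = P(Z_{n,n} ∈ {0, -1})`. With
`σ = Σ_{i ≤ n} α i (1 - α i)`, the characteristic function of `Z_{n,n}` is
`∏ (1 - 2 α i (1 - α i) (1 - cos θ)) ≤ exp (-2 σ (1 - cos θ))`, so Fourier inversion and
the substitution `s = sin (θ / 2)` bound this probability by a Gaussian integral, `1 / √(π σ)`.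
-/

open Finset Real
open scoped AddMonoidAlgebra

noncomputable section

namespace KrasnoselskiiMann

open AddMonoidAlgebra

/- A finitely supported signed measure on `ℤ` is an element of `ℝ[ℤ]`: convolution is the
product, and `expect g h` is the integral of `g` against `h`. -/
def expect (g : ℤ → ℝ) (h : ℝ[ℤ]) : ℝ := h.coeff.sum fun z c => g z * c

lemma expect_add (g : ℤ → ℝ) (h₁ h₂ : ℝ[ℤ]) :
    expect g (h₁ + h₂) = expect g h₁ + expect g h₂ :=
  Finsupp.sum_add_index' (fun _ => mul_zero _) (fun _ _ _ => mul_add _ _ _)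

lemma expect_single (g : ℤ → ℝ) (w : ℤ) (c : ℝ) : expect g (single w c) = g w * c :=
  Finsupp.sum_single_index (mul_zero _)

lemma expect_one (g : ℤ → ℝ) : expect g 1 = g 0 := by
  rw [one_def, expect_single, mul_one]

lemma expect_single_mul (g : ℤ → ℝ) (w : ℤ) (c : ℝ) (h : ℝ[ℤ]) :
    expect g (single w c * h) = c * expect (fun z => g (z + w)) h := by
  induction h using induction_linear with
  | zero => simp [expect]
  | add h₁ h₂ ih₁ ih₂ => rw [mul_add, expect_add, ih₁, ih₂, expect_add, mul_add]
  | single v d => rw [single_mul_single, expect_single, expect_single, add_comm v w]; ring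

lemma expect_add_left (g₁ g₂ : ℤ → ℝ) (h : ℝ[ℤ]) :
    expect (g₁ + g₂) h = expect g₁ h + expect g₂ h := by
  simp only [expect, Pi.add_apply, add_mul, Finsupp.sum_add]

lemma expect_ite_eq (b : ℤ) (h : ℝ[ℤ]) :
    expect (fun z => if z = b then 1 else 0) h = h.coeff b := by
  simp only [expect, ite_mul, one_mul, zero_mul]
  exact Finsupp.sum_ite_self_eq' _ _

lemma expect_eq_zero_of_odd {g : ℤ → ℝ} {h : ℝ[ℤ]} (hg : ∀ z, g (-z) = -g z)
    (hh : ∀ z, h.coeff (-z) = h.coeff z) : expect g h = 0 := by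
  have hg0 : g 0 = 0 := by linarith [neg_zero (G := ℤ) ▸ hg 0]
  refine Finset.sum_involution (fun z _ => -z) (fun z _ => by simp only [hg, hh]; ring)
    (fun z _ hz hneg => hz ?_) (fun z hz => by simpa [hh] using hz) (fun z _ => neg_neg z)
  obtain rfl : z = 0 := by omega
  simp [hg0]

def stepUp (a : ℝ) : ℝ[ℤ] := single 0 (1 - a) + single 1 a

def stepDown (a : ℝ) : ℝ[ℤ] := single 0 (1 - a) + single (-1) a

lemma expect_stepUp_mul (g : ℤ → ℝ) (a : ℝ) (h : ℝ[ℤ]) :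
    expect g (stepUp a * h) = (1 - a) * expect g h + a * expect (fun z => g (z + 1)) h := by
  simp only [stepUp, add_mul, expect_add, expect_single_mul, add_zero]

lemma expect_stepDown_mul (g : ℤ → ℝ) (a : ℝ) (h : ℝ[ℤ]) :
    expect g (stepDown a * h) = (1 - a) * expect g h + a * expect (fun z => g (z - 1)) h := by
  simp only [stepDown, add_mul, expect_add, expect_single_mul, add_zero, ← sub_eq_add_neg]

lemma coeff_stepUp_mul (a : ℝ) (h : ℝ[ℤ]) (z : ℤ) :
    (stepUp a * h).coeff z = (1 - a) * h.coeff z + a * h.coeff (z - 1) := by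
  simp only [stepUp, add_mul, coeff_add, Finsupp.add_apply, coeff_single_mul_apply, neg_zero,
    zero_add, neg_add_eq_sub]

lemma coeff_stepDown_mul (a : ℝ) (h : ℝ[ℤ]) (z : ℤ) :
    (stepDown a * h).coeff z = (1 - a) * h.coeff z + a * h.coeff (z + 1) := by
  simp only [stepDown, add_mul, coeff_add, Finsupp.add_apply, coeff_single_mul_apply, neg_zero,
    zero_add, neg_neg, add_comm (1 : ℤ)]

/-- The law of `Z_{m,n}`. -/
def walk (α : ℕ → ℝ) (m n : ℕ) : ℝ[ℤ] :=
  (∏ i ∈ Icc 1 m, stepDown (α i)) * ∏ j ∈ Icc 1 n, stepUp (α j)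

def signMean (α : ℕ → ℝ) (c : ℤ) (m n : ℕ) : ℝ :=
  expect (fun z => ((z + c).sign : ℝ)) (walk α m n)

def cosCoeff (f : ℝ → ℝ) (z : ℤ) : ℝ := π⁻¹ * ∫ θ in 0..π, f θ * cos (z * θ)

lemma cosCoeff_one (z : ℤ) : cosCoeff (fun _ => 1) z = if z = 0 then 1 else 0 := by
  split_ifs with hz
  · simp [cosCoeff, hz, pi_ne_zero]
  · have hz' : (z : ℝ) ≠ 0 := Int.cast_ne_zero.mpr hz
    simp [cosCoeff, intervalIntegral.integral_comp_mul_left (fun θ => cos θ) hz',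
      sin_int_mul_pi]

lemma cosCoeff_kernel_mul {f : ℝ → ℝ} (hf : Continuous f) (t : ℝ) (z : ℤ) :
    cosCoeff (fun θ => (1 - 2 * t * (1 - cos θ)) * f θ) z =
      t * cosCoeff f (z - 1) + (1 - 2 * t) * cosCoeff f z + t * cosCoeff f (z + 1) := by
  have hint (w : ℤ) :
      IntervalIntegrable (fun θ => f θ * cos (w * θ)) MeasureTheory.volume 0 π :=
    (hf.mul (by fun_prop)).intervalIntegrable _ _
  have hsplit : (fun θ => (1 - 2 * t * (1 - cos θ)) * f θ * cos (z * θ)) = fun θ =>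
      t * (f θ * cos (((z - 1 : ℤ) : ℝ) * θ)) + (1 - 2 * t) * (f θ * cos (z * θ))
        + t * (f θ * cos (((z + 1 : ℤ) : ℝ) * θ)) := by
    funext θ
    simp only [Int.cast_sub, Int.cast_add, Int.cast_one, sub_mul, add_mul, one_mul, cos_sub,
      cos_add]
    ring
  simp only [cosCoeff, hsplit]
  rw [intervalIntegral.integral_add ((hint _).const_mul _ |>.add ((hint _).const_mul _))
      ((hint _).const_mul _),
    intervalIntegral.integral_add ((hint _).const_mul _) ((hint _).const_mul _)]
  simp only [intervalIntegral.integral_const_mul]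
  ring

/-- The characteristic function `θ ↦ E cos (θ Z_{n,n})`. -/
def walkChar (α : ℕ → ℝ) (n : ℕ) (θ : ℝ) : ℝ :=
  ∏ i ∈ Icc 1 n, (1 - 2 * (α i * (1 - α i)) * (1 - cos θ))

section Walk

variable (α : ℕ → ℝ)

lemma walk_zero_zero : walk α 0 0 = 1 := by simp [walk]

lemma walk_succ_left (m n : ℕ) : walk α (m + 1) n = stepDown (α (m + 1)) * walk α m n := by
  rw [walk, walk, prod_Icc_succ_top (by omega)]; ring

lemma walk_succ_right (m n : ℕ) : walk α m (n + 1) = stepUp (α (n + 1)) * walk α m n := by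
  rw [walk, walk, prod_Icc_succ_top (by omega)]; ring

lemma coeff_walk_succ_succ (n : ℕ) (z : ℤ) :
    (walk α (n + 1) (n + 1)).coeff z =
      α (n + 1) * (1 - α (n + 1)) * (walk α n n).coeff (z - 1)
        + (1 - 2 * (α (n + 1) * (1 - α (n + 1)))) * (walk α n n).coeff z
        + α (n + 1) * (1 - α (n + 1)) * (walk α n n).coeff (z + 1) := by
  rw [walk_succ_left, walk_succ_right, coeff_stepDown_mul, coeff_stepUp_mul, coeff_stepUp_mul,
    add_sub_cancel_right]
  ring

lemma signMean_succ_left (c : ℤ) (m n : ℕ) :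
    signMean α c (m + 1) n =
      (1 - α (m + 1)) * signMean α c m n + α (m + 1) * signMean α (c - 1) m n := by
  simp only [signMean, walk_succ_left, expect_stepDown_mul, sub_add_eq_add_sub, add_sub_assoc]

lemma signMean_succ_right (c : ℤ) (m n : ℕ) :
    signMean α c m (n + 1) =
      (1 - α (n + 1)) * signMean α c m n + α (n + 1) * signMean α (c + 1) m n := by
  simp only [signMean, walk_succ_right, expect_stepUp_mul, add_right_comm _ (1 : ℤ), add_assoc]

lemma expect_walk_zero_left (n : ℕ) {g : ℤ → ℝ} (hg : ∀ z, 0 ≤ z → g z = 1) :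
    expect g (walk α 0 n) = 1 := by
  induction n generalizing g with
  | zero => rw [walk_zero_zero, expect_one, hg 0 le_rfl]
  | succ n ih =>
    rw [walk_succ_right, expect_stepUp_mul, ih hg, ih fun z hz => hg _ (by omega)]
    ring

lemma signMean_zero_left {c : ℤ} (hc : 0 < c) (n : ℕ) : signMean α c 0 n = 1 :=
  expect_walk_zero_left α n fun z hz => by rw [Int.sign_eq_one_of_pos (by omega), Int.cast_one]

lemma continuous_walkChar (n : ℕ) : Continuous (walkChar α n) :=
  continuous_finsetProd _ fun _ _ => by fun_prop

lemma coeff_walk_diag (n : ℕ) (z : ℤ) : (walk α n n).coeff z = cosCoeff (walkChar α n) z := by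
  induction n generalizing z with
  | zero =>
    have hchar : walkChar α 0 = fun _ => 1 := funext fun θ => by simp [walkChar]
    simp only [walk_zero_zero, hchar, cosCoeff_one, one_def, coeff_single, Finsupp.single_apply,
      eq_comm]
  | succ n ih =>
    have hchar : walkChar α (n + 1) = fun θ =>
        (1 - 2 * (α (n + 1) * (1 - α (n + 1))) * (1 - cos θ)) * walkChar α n θ := by
      funext θ; rw [walkChar, walkChar, prod_Icc_succ_top (by omega), mul_comm]
    rw [coeff_walk_succ_succ, ih, ih, ih, hchar, cosCoeff_kernel_mul (continuous_walkChar α n)]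

lemma coeff_walk_diag_neg (n : ℕ) (z : ℤ) :
    (walk α n n).coeff (-z) = (walk α n n).coeff z := by
  simp only [coeff_walk_diag, cosCoeff, Int.cast_neg, neg_mul, cos_neg]

lemma signMean_zero_diag (n : ℕ) : signMean α 0 n n = 0 :=
  expect_eq_zero_of_odd (fun z => by simp [Int.sign_neg]) (coeff_walk_diag_neg α n)

lemma sign_add_one (z : ℤ) :
    ((z + 1).sign : ℝ) = z.sign + ((if z = 0 then 1 else 0) + if z = -1 then 1 else 0) := by
  obtain h | rfl | rfl | h : z < -1 ∨ z = -1 ∨ z = 0 ∨ 0 < z := by omega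
  · rw [Int.sign_eq_neg_one_of_neg (by omega : z + 1 < 0), Int.sign_eq_neg_one_of_neg (by omega)]
    simp [show z ≠ 0 by omega, h.ne]
  · simp
  · simp
  · rw [Int.sign_eq_one_of_pos (by omega : 0 < z + 1), Int.sign_eq_one_of_pos h]
    simp [h.ne', show z ≠ -1 by omega]

lemma signMean_one_diag (n : ℕ) :
    signMean α 1 n n = π⁻¹ * ∫ θ in 0..π, walkChar α n θ * (1 + cos θ) := by
  have hint (w : ℤ) : IntervalIntegrable (fun θ => walkChar α n θ * cos (w * θ))
      MeasureTheory.volume 0 π :=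
    ((continuous_walkChar α n).mul (by fun_prop)).intervalIntegrable _ _
  have hsign : (fun z : ℤ => ((z + 1).sign : ℝ)) = (fun z => (z.sign : ℝ)) +
      ((fun z => if z = 0 then 1 else 0) + fun z => if z = -1 then 1 else 0) :=
    funext sign_add_one
  have hodd := signMean_zero_diag α n
  simp only [signMean, add_zero] at hodd
  rw [signMean, hsign, expect_add_left, expect_add_left, expect_ite_eq, expect_ite_eq, hodd,
    zero_add, coeff_walk_diag, coeff_walk_diag, cosCoeff, cosCoeff, ← mul_add,
    ← intervalIntegral.integral_add (hint 0) (hint (-1))]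
  simp [mul_add]

lemma walkChar_le_exp (n : ℕ) (θ : ℝ) :
    walkChar α n θ ≤ exp (-(2 * (1 - cos θ) * ∑ i ∈ Icc 1 n, α i * (1 - α i))) := by
  rw [mul_sum, ← sum_neg_distrib, exp_sum]
  refine prod_le_prod (fun i _ => ?_) (fun i _ => ?_)
  · have hvar : α i * (1 - α i) ≤ 1 / 4 := by nlinarith [sq_nonneg (α i - 1 / 2)]
    nlinarith [cos_le_one θ, neg_one_le_cos θ]
  · linarith [add_one_le_exp (-(2 * (1 - cos θ) * (α i * (1 - α i))))]

end Walk

lemma integral_exp_mul_one_add_cos_le {S : ℝ} (hS : 0 < S) :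
    ∫ θ in 0..π, exp (-(2 * (1 - cos θ) * S)) * (1 + cos θ) ≤ √(π / S) := by
  set g : ℝ → ℝ := fun s => 4 * exp (-(4 * S) * s ^ 2)
  have hsubst : ∫ θ in 0..π, g (sin (θ / 2)) * (cos (θ / 2) / 2) = ∫ s in 0..1, g s := by
    have hderiv (θ : ℝ) : HasDerivAt (fun θ => sin (θ / 2)) (cos (θ / 2) / 2) θ := by
      have := ((hasDerivAt_id θ).div_const 2).sin
      simp only [id] at this
      convert this using 1
      ring
    simpa using intervalIntegral.integral_comp_mul_deriv (a := 0) (b := π)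
      (fun θ _ => hderiv θ) (by fun_prop) (by fun_prop : Continuous g)
  -- with `c = cos (θ / 2) ∈ [0, 1]`: `1 - cos θ = 2 sin² (θ/2)`, `1 + cos θ = 2 c² ≤ 2 c`
  have hpoint : ∀ θ ∈ Set.Icc 0 π,
      exp (-(2 * (1 - cos θ) * S)) * (1 + cos θ) ≤ g (sin (θ / 2)) * (cos (θ / 2) / 2) := by
    intro θ ⟨h0, hπ⟩
    have hc0 : 0 ≤ cos (θ / 2) := cos_nonneg_of_mem_Icc ⟨by linarith [pi_pos], by linarith⟩
    have hcos : cos θ = 2 * cos (θ / 2) ^ 2 - 1 := by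
      rw [← cos_two_mul, mul_div_cancel₀ _ two_ne_zero]
    have hexp : -(2 * (1 - cos θ) * S) = -(4 * S) * sin (θ / 2) ^ 2 := by
      rw [hcos, sin_sq]; ring
    have hsq : cos (θ / 2) ^ 2 ≤ cos (θ / 2) := by nlinarith [cos_le_one (θ / 2)]
    rw [hexp, hcos]
    nlinarith [mul_le_mul_of_nonneg_left hsq (exp_pos (-(4 * S) * sin (θ / 2) ^ 2)).le]
  calc ∫ θ in 0..π, exp (-(2 * (1 - cos θ) * S)) * (1 + cos θ)
      ≤ ∫ θ in 0..π, g (sin (θ / 2)) * (cos (θ / 2) / 2) :=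
        intervalIntegral.integral_mono_on pi_nonneg
          (by apply Continuous.intervalIntegrable; fun_prop)
          (by apply Continuous.intervalIntegrable; fun_prop) hpoint
    _ = ∫ s in 0..1, g s := hsubst
    _ ≤ ∫ s in Set.Ioi 0, g s := by
        rw [intervalIntegral.integral_of_le zero_le_one]
        exact MeasureTheory.setIntegral_mono_set
          ((integrable_exp_neg_mul_sq (by positivity)).const_mul 4).integrableOn
          (Filter.Eventually.of_forall fun s => by positivity) Set.Ioc_subset_Ioi_self.eventuallyLE
    _ = √(π / S) := by
        rw [MeasureTheory.integral_const_mul, integral_gaussian_Ioi,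
          show π / (4 * S) = π / S / 2 ^ 2 by ring, sqrt_div' _ (by positivity),
          sqrt_sq zero_le_two]
        ring

lemma sqrt_mul_signMean_one_diag_le (α : ℕ → ℝ) (n : ℕ) :
    √(π * ∑ i ∈ Icc 1 n, α i * (1 - α i)) * signMean α 1 n n ≤ 1 := by
  set S := ∑ i ∈ Icc 1 n, α i * (1 - α i)
  rcases le_or_gt S 0 with hS | hS
  · rw [sqrt_eq_zero_of_nonpos (mul_nonpos_of_nonneg_of_nonpos pi_nonneg hS), zero_mul]
    exact zero_le_one
  have hroots : √(π * S) * √(π / S) = π := by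
    rw [← sqrt_mul (by positivity), show π * S * (π / S) = π ^ 2 by field_simp,
      sqrt_sq pi_nonneg]
  calc √(π * S) * signMean α 1 n n
      ≤ √(π * S) * (π⁻¹ * ∫ θ in 0..π, exp (-(2 * (1 - cos θ) * S)) * (1 + cos θ)) := by
        rw [signMean_one_diag]
        gcongr
        refine intervalIntegral.integral_mono_on pi_nonneg ?_ ?_ fun θ _ => ?_
        · exact ((continuous_walkChar α n).mul (by fun_prop)).intervalIntegrable _ _
        · exact Continuous.intervalIntegrable (by fun_prop) _ _
        · exact mul_le_mul_of_nonneg_right (walkChar_le_exp α n θ)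
            (by linarith [neg_one_le_cos θ])
    _ ≤ √(π * S) * (π⁻¹ * √(π / S)) := by
        gcongr; exact integral_exp_mul_one_add_cos_le hS
    _ = 1 := by rw [mul_left_comm, hroots, inv_mul_cancel₀ pi_ne_zero]

section Iteration

variable {X : Type*} [NormedAddCommGroup X] [NormedSpace ℝ X]

lemma norm_convexCombo_sub_le {a : ℝ} (ha : a ∈ Set.Icc (0 : ℝ) 1) (u v w : X) :
    ‖(1 - a) • u + a • v - w‖ ≤ (1 - a) * ‖u - w‖ + a * ‖v - w‖ := by
  have hcombo : (1 - a) • u + a • v - w = (1 - a) • (u - w) + a • (v - w) := by module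
  rw [hcombo]
  exact convexOn_univ_norm.2 trivial trivial (sub_nonneg.2 ha.2) ha.1 (by ring)

variable {C : Set X} {T : X → X} {α : ℕ → ℝ} {x : ℕ → X}

lemma iterate_mem (hC : Convex ℝ C) (hTC : Set.MapsTo T C C)
    (hα : ∀ k, α k ∈ Set.Icc (0 : ℝ) 1) (hx0 : x 0 ∈ C)
    (hx : ∀ k, x (k + 1) = (1 - α (k + 1)) • x k + α (k + 1) • T (x k)) (k : ℕ) :
    x k ∈ C := by
  induction k with
  | zero => exact hx0
  | succ k ih => rw [hx]; exact hC ih (hTC ih) (sub_nonneg.2 (hα _).2) (hα _).1 (by ring)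

lemma norm_iterate_succ_sub_le (hα : ∀ k, α k ∈ Set.Icc (0 : ℝ) 1)
    (hx : ∀ k, x (k + 1) = (1 - α (k + 1)) • x k + α (k + 1) • T (x k)) (k : ℕ) (w : X) :
    ‖x (k + 1) - w‖ ≤ (1 - α (k + 1)) * ‖x k - w‖ + α (k + 1) * ‖T (x k) - w‖ := by
  rw [hx]; exact norm_convexCombo_sub_le (hα _) _ _ _

theorem norm_iterate_sub_le_diam_mul (hC : Convex ℝ C) (hCb : Bornology.IsBounded C)
    (hTC : Set.MapsTo T C C) (hT : ∀ x ∈ C, ∀ y ∈ C, ‖T x - T y‖ ≤ ‖x - y‖)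
    (hα : ∀ k, α k ∈ Set.Icc (0 : ℝ) 1) (hx0 : x 0 ∈ C)
    (hx : ∀ k, x (k + 1) = (1 - α (k + 1)) • x k + α (k + 1) • T (x k)) (n : ℕ) :
    ∀ m ≤ n, ‖x m - T (x n)‖ ≤ Metric.diam C * signMean α 1 m n ∧
      ‖x m - x n‖ ≤ Metric.diam C * signMean α 0 m n := by
  have hmem := iterate_mem hC hTC hα hx0 hx
  have hstart (l : ℕ) : ‖x 0 - T (x l)‖ ≤ Metric.diam C * signMean α 1 0 l := by
    rw [signMean_zero_left α one_pos, mul_one, ← dist_eq_norm]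
    exact Metric.dist_le_diam_of_mem hCb (hmem 0) (hTC (hmem l))
  have hdiag (l : ℕ) : ‖x l - x l‖ ≤ Metric.diam C * signMean α 0 l l := by
    rw [signMean_zero_diag, sub_self, norm_zero, mul_zero]
  have hweights (k : ℕ) : 0 ≤ α k ∧ 0 ≤ 1 - α k := ⟨(hα k).1, sub_nonneg.2 (hα k).2⟩
  induction n with
  | zero =>
    intro m hm
    obtain rfl : m = 0 := by omega
    exact ⟨hstart 0, hdiag 0⟩
  | succ n ih =>
    have hP : ∀ m ≤ n + 1,
        ‖x m - x (n + 1)‖ ≤ Metric.diam C * signMean α 0 m (n + 1) := by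
      intro m hm
      rcases hm.lt_or_eq with hm | rfl
      · obtain ⟨hQ, hP⟩ := ih m (by omega)
        obtain ⟨ha, ha'⟩ := hweights (n + 1)
        rw [norm_sub_rev] at hQ hP ⊢
        calc ‖x (n + 1) - x m‖
            ≤ (1 - α (n + 1)) * ‖x n - x m‖ + α (n + 1) * ‖T (x n) - x m‖ :=
              norm_iterate_succ_sub_le hα hx n _
          _ ≤ (1 - α (n + 1)) * (Metric.diam C * signMean α 0 m n)
                + α (n + 1) * (Metric.diam C * signMean α 1 m n) := by gcongr
          _ = Metric.diam C * signMean α 0 m (n + 1) := by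
              rw [signMean_succ_right, zero_add]; ring
      · exact hdiag _
    intro m hm
    refine ⟨?_, hP m hm⟩
    induction m with
    | zero => exact hstart _
    | succ m ihm =>
      obtain ⟨ha, ha'⟩ := hweights (m + 1)
      have hQ := ihm (by omega)
      have hTP := (hT _ (hmem m) _ (hmem _)).trans (hP m (by omega))
      calc ‖x (m + 1) - T (x (n + 1))‖
          ≤ (1 - α (m + 1)) * ‖x m - T (x (n + 1))‖
              + α (m + 1) * ‖T (x m) - T (x (n + 1))‖ := norm_iterate_succ_sub_le hα hx m _
        _ ≤ (1 - α (m + 1)) * (Metric.diam C * signMean α 1 m (n + 1))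
              + α (m + 1) * (Metric.diam C * signMean α 0 m (n + 1)) := by gcongr
        _ = Metric.diam C * signMean α 1 (m + 1) (n + 1) := by
            rw [signMean_succ_left, sub_self]; ring

end Iteration

end KrasnoselskiiMann

end

theorem km_asymptotic_regularity
    {X : Type*} [NormedAddCommGroup X] [NormedSpace ℝ X]
    (C : Set X) (hCconv : Convex ℝ C)
    (hCbdd : Bornology.IsBounded C)
    (T : X → X) (hTmaps : Set.MapsTo T C C)
    (hT : ∀ x ∈ C, ∀ y ∈ C, ‖T x - T y‖ ≤ ‖x - y‖)
    (α : ℕ → ℝ) (hα : ∀ k, α k ∈ Set.Icc (0:ℝ) 1)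
    (x : ℕ → X) (hx0 : x 0 ∈ C)
    (hx : ∀ k, x (k + 1) = (1 - α (k + 1)) • x k + α (k + 1) • T (x k))
    (n : ℕ) :
    Real.sqrt (Real.pi * ∑ i ∈ Finset.Icc 1 n, α i * (1 - α i)) * ‖x n - T (x n)‖
      ≤ Metric.diam C ∧
    (0 < ∑ i ∈ Finset.Icc 1 n, α i * (1 - α i) →
      ‖x n - T (x n)‖
        ≤ Metric.diam C / Real.sqrt (Real.pi * ∑ i ∈ Finset.Icc 1 n, α i * (1 - α i))) := by
  set S := ∑ i ∈ Finset.Icc 1 n, α i * (1 - α i)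
  have hbound := (KrasnoselskiiMann.norm_iterate_sub_le_diam_mul hCconv hCbdd hTmaps hT hα
    hx0 hx n n le_rfl).1
  have hmain : √(π * S) * ‖x n - T (x n)‖ ≤ Metric.diam C :=
    calc √(π * S) * ‖x n - T (x n)‖
        ≤ √(π * S) * (Metric.diam C * KrasnoselskiiMann.signMean α 1 n n) := by gcongr
      _ = Metric.diam C * (√(π * S) * KrasnoselskiiMann.signMean α 1 n n) := by ring
      _ ≤ Metric.diam C * 1 := mul_le_mul_of_nonneg_left
          (KrasnoselskiiMann.sqrt_mul_signMean_one_diag_le α n) Metric.diam_nonneg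
      _ = Metric.diam C := mul_one _
  exact ⟨hmain, fun hS => (le_div_iff₀' (by positivity)).2 hmain⟩
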